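/- BV symmetries are probability preserving: if ψ is a BV symmetry of G under a partition Δ, then P(s) = P(ψ(s)) for all states s. -/

import Mathlib

open scoped BigOperators

/-- The Gibbs distribution of a graphical model with weights `w` and features `f`. -/
noncomputable def gibbs {S J : Type} [Fintype S] [Fintype J]
    (w : J → ℝ) (f : J → S → ℝ) (s : S) : ℝ :=
  Real.exp (∑ j, w j * f j s) / ∑ t : S, Real.exp (∑ j, w j * f j t)

/-- The bijective correspondence between states of `G` and states of the block-transformed
model `Ĝ` for the block partition encoded by `blk : V → L`. -/
def blockEquiv {V D L : Type} (blk : V → L) :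
    (V → D) ≃ ((l : L) → {x : V // blk x = l} → D) where
  toFun s l v := s v.1
  invFun sh v := sh (blk v) ⟨v, rfl⟩
  left_inv s := rfl
  right_inv sh := by
    funext l v
    obtain ⟨x, hx⟩ := v
    subst hx
    rfl

/-- A BV permutation (a permutation of the block-value set `Δ_V`, i.e. of pairs of a block
`B_l` together with an assignment to its variables) is valid: it maps all assignments of a
block to assignments of one fixed block. -/
def ValidBV {V D L : Type} (blk : V → L)
    (ψ : Equiv.Perm (Σ l : L, ({x : V // blk x = l} → D))) : Prop :=
  ∀ (l : L) (b : {x : V // blk x = l} → D) (l' : L) (b' : {x : V // blk x = l'} → D),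
    ψ ⟨l, b⟩ = ⟨l', b'⟩ →
      ∀ b'' : {x : V // blk x = l} → D, ∃ b''' : {x : V // blk x = l'} → D,
        ψ ⟨l, b''⟩ = ⟨l', b'''⟩

/-!
A VV symmetry of the block-transformed model permutes the features and fixes their weights, so
it leaves the energy `∑ j, w j * f j s` of every state unchanged; the partition function does
not depend on the state, hence the Gibbs probability is unchanged as well.
-/

theorem sum_mul_eq_of_perm {S J : Type} [Fintype J] (w : J → ℝ) (f : J → S → ℝ)
    (σ : Equiv.Perm J) {s t : S} (hw : ∀ j, w (σ j) = w j) (hf : ∀ j, f (σ j) s = f j t) :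
    ∑ j, w j * f j s = ∑ j, w j * f j t :=
  calc ∑ j, w j * f j s = ∑ j, w (σ j) * f (σ j) s := (Equiv.sum_comp σ _).symm
    _ = ∑ j, w j * f j t := by simp only [hw, hf]

theorem gibbs_eq_of_energy_eq {S J : Type} [Fintype S] [Fintype J] (w : J → ℝ)
    (f : J → S → ℝ) {s t : S} (h : ∑ j, w j * f j s = ∑ j, w j * f j t) :
    gibbs w f s = gibbs w f t := by
  rw [gibbs, gibbs, h]

theorem bv_symmetry_preserves_prob_general
    {V D L J : Type} [Fintype V] [DecidableEq V] [Fintype D]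
    [Fintype J]
    (blk : V → L) (w : J → ℝ) (f : J → (V → D) → ℝ)
    (act : ((l : L) → {x : V // blk x = l} → D) → ((l : L) → {x : V // blk x = l} → D))
    (hsym : ∃ σ : Equiv.Perm J, ∀ j, w (σ j) = w j ∧
      ∀ sh : (l : L) → {x : V // blk x = l} → D,
        f (σ j) ((blockEquiv blk).symm sh) = f j ((blockEquiv blk).symm (act sh))) :
    ∀ s : V → D,
      gibbs w f s = gibbs w f ((blockEquiv blk).symm (act (blockEquiv blk s))) := by
  intro s
  obtain ⟨σ, hσ⟩ := hsym
  refine gibbs_eq_of_energy_eq w f (sum_mul_eq_of_perm w f σ (fun j => (hσ j).1) fun j => ?_)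
  simpa only [Equiv.symm_apply_apply] using (hσ j).2 (blockEquiv blk s)

/-- BV symmetries are probability preserving: if `ψ` is a BV symmetry of `G` under the
partition `blk` (i.e. the corresponding VV permutation on the block-transformed model `Ĝ`,
whose features are `f̂_j = f_j ∘ e⁻¹` with `e = blockEquiv blk`, is a VV symmetry of `Ĝ`,
witnessed by a feature permutation `σ`; `act` is its action on the transformed states),
then `P(s) = P(ψ(s))` for all states `s`. -/
theorem bv_symmetry_preserves_prob
    {V D L J : Type} [Fintype V] [DecidableEq V] [Fintype D]
    [Fintype L] [DecidableEq L] [Fintype J]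
    (blk : V → L) (w : J → ℝ) (f : J → (V → D) → ℝ)
    (ψ : Equiv.Perm (Σ l : L, ({x : V // blk x = l} → D)))
    (hvalid : ValidBV blk ψ)
    (act : ((l : L) → {x : V // blk x = l} → D) → ((l : L) → {x : V // blk x = l} → D))
    (hact : ∀ (sh : (l : L) → {x : V // blk x = l} → D) (l : L),
      act sh (ψ ⟨l, sh l⟩).1 = (ψ ⟨l, sh l⟩).2)
    (hsym : ∃ σ : Equiv.Perm J, ∀ j, w (σ j) = w j ∧
      ∀ sh : (l : L) → {x : V // blk x = l} → D,
        f (σ j) ((blockEquiv blk).symm sh) = f j ((blockEquiv blk).symm (act sh))) :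
    ∀ s : V → D,
      gibbs w f s = gibbs w f ((blockEquiv blk).symm (act (blockEquiv blk s))) :=
  bv_symmetry_preserves_prob_general blk w f act hsym
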